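/- Let G₁ be a finite simple graph with m₁ edges and G₂ a finite simple graph with n₂ vertices and m₂ edges, both without isolated vertices. Let f₁ be a weak IASI of G₁ having n₁' mono-indexed vertices and m₁' mono-indexed edges, and let f₂ be a weak IASI of G₂ having n₂' mono-indexed vertices and m₂' mono-indexed edges. Then there exists a weak IASI of the edge corona G₁ ⋄ G₂ whose number of mono-indexed edges equals m₁'(1 + m₂' + 2n₂') + (m₁ − m₁')(m₂ + n₂). -/

import Mathlib

open Finset Pointwise

namespace IASIPaper

variable {V : Type*}

/-- The induced edge labeling: `f⁺(uv) = f(u) + f(v)` (sumset). -/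
def edgeLabel (f : V → Finset ℕ) : Sym2 V → Finset ℕ :=
  Sym2.lift ⟨fun u v => f u + f v, fun u v => add_comm (f u) (f v)⟩

/-- An integer additive set-indexer of a simple graph `G`. -/
def IsIASI (G : SimpleGraph V) (f : V → Finset ℕ) : Prop :=
  (∀ v, (f v).Nonempty) ∧ Function.Injective f ∧
    Set.InjOn (edgeLabel f) G.edgeSet

/-- A weak integer additive set-indexer. -/
def IsWeakIASI (G : SimpleGraph V) (f : V → Finset ℕ) : Prop :=
  IsIASI G f ∧ ∀ ⦃u v : V⦄, G.Adj u v → (f u + f v).card = max (f u).card (f v).card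

/-- The number of mono-indexed edges of `G` under `f`. -/
noncomputable def monoEdgeCount (G : SimpleGraph V) (f : V → Finset ℕ) : ℕ :=
  {e | e ∈ G.edgeSet ∧ (edgeLabel f e).card = 1}.ncard

/-- The number of mono-indexed vertices under `f`. -/
noncomputable def monoVertexCount (f : V → Finset ℕ) : ℕ :=
  {v | (f v).card = 1}.ncard

/-- The sparing number of `G`. -/
noncomputable def sparingNumber (G : SimpleGraph V) : ℕ :=
  sInf { k | ∃ f, IsWeakIASI G f ∧ monoEdgeCount G f = k }

/-- The minimum number of mono-indexed vertices among weak IASIs of `G`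
attaining exactly `sparingNumber G` mono-indexed edges. -/
noncomputable def minMonoVertices (G : SimpleGraph V) : ℕ :=
  sInf { k | ∃ f, IsWeakIASI G f ∧ monoEdgeCount G f = sparingNumber G ∧
    monoVertexCount f = k }

/-- The edge corona `G₁ ⋄ G₂`: take one copy of `G₂` for every edge of `G₁`
and join both end vertices of that edge to every vertex of the copy. -/
def edgeCorona {V₁ V₂ : Type*} (G₁ : SimpleGraph V₁) (G₂ : SimpleGraph V₂) :
    SimpleGraph (V₁ ⊕ (G₁.edgeSet × V₂)) where
  Adj a b :=
    match a, b with
    | Sum.inl u, Sum.inl v => G₁.Adj u v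
    | Sum.inl u, Sum.inr ex => u ∈ (ex.1 : Sym2 V₁)
    | Sum.inr ex, Sum.inl v => v ∈ (ex.1 : Sym2 V₁)
    | Sum.inr ex, Sum.inr ey => ex.1 = ey.1 ∧ G₂.Adj ex.2 ey.2
  symm := by
    constructor
    rintro (u | ⟨e, x⟩) (v | ⟨e', y⟩) h
    · exact h.symm
    · exact h
    · exact h
    · exact ⟨h.1.symm, h.2.symm⟩
  loopless := by
    constructor
    rintro (u | ⟨e, x⟩) h
    · exact G₁.irrefl h
    · exact G₂.irrefl h.2



/-! ### Auxiliary lemmas -/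

lemma edgeLabel_mk (f : V → Finset ℕ) (u v : V) :
    edgeLabel f s(u, v) = f u + f v := rfl

lemma pair_eq_pair_iff {x y x' y' : ℕ} (h1 : x < y) (h2 : x' < y')
    (h : ({x, y} : Finset ℕ) = {x', y'}) : x = x' ∧ y = y' := by
  have hx : x ∈ ({x', y'} : Finset ℕ) := h ▸ (by simp)
  have hy : y ∈ ({x', y'} : Finset ℕ) := h ▸ (by simp)
  have hx' : x' ∈ ({x, y} : Finset ℕ) := h ▸ (by simp)
  simp only [mem_insert, mem_singleton] at hx hy hx'
  omega

lemma singleton_add_pair (a x y : ℕ) :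
    ({a} : Finset ℕ) + {x, y} = {a + x, a + y} := by
  ext z
  simp only [Finset.mem_add, mem_insert, mem_singleton]
  constructor
  · rintro ⟨u, hu, v, hv, rfl⟩; rcases hv with rfl | rfl <;> simp [hu]
  · rintro (rfl | rfl)
    · exact ⟨a, rfl, x, Or.inl rfl, rfl⟩
    · exact ⟨a, rfl, y, Or.inr rfl, rfl⟩

lemma card_add_le_right {A B : Finset ℕ} (hB : B.Nonempty) : A.card ≤ (A + B).card := by
  obtain ⟨b, hb⟩ := hB
  calc A.card = (A + {b}).card := by
        rw [Finset.add_singleton]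
        exact (Finset.card_image_of_injective _ (add_left_injective b)).symm
    _ ≤ (A + B).card :=
        Finset.card_le_card (Finset.add_subset_add_left (by simpa using hb))

lemma card_add_le_left {A B : Finset ℕ} (hA : A.Nonempty) : B.card ≤ (A + B).card := by
  rw [add_comm A B]; exact card_add_le_right hA

lemma card_add_eq_one_iff {A B : Finset ℕ} (hA : A.Nonempty) (hB : B.Nonempty) :
    (A + B).card = 1 ↔ A.card = 1 ∧ B.card = 1 := by
  constructor
  · intro h
    have h1 := card_add_le_right (A := A) hB
    have h2 := card_add_le_left (B := B) hA
    have h3 := Finset.card_pos.mpr hA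
    have h4 := Finset.card_pos.mpr hB
    omega
  · rintro ⟨h1, h2⟩
    obtain ⟨a, rfl⟩ := Finset.card_eq_one.mp h1
    obtain ⟨b, rfl⟩ := Finset.card_eq_one.mp h2
    simp [Finset.singleton_add_singleton]

lemma card_lt_card_add' {A B : Finset ℕ} (hA : A.Nonempty) {b b' : ℕ}
    (hb : b ∈ B) (hb' : b' ∈ B) (hlt : b < b') : A.card < (A + B).card := by
  set M := A.max' hA with hM
  have hsub : insert (M + b') (A.image (· + b)) ⊆ A + B := by
    intro z hz
    rcases Finset.mem_insert.mp hz with rfl | hz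
    · exact Finset.add_mem_add (A.max'_mem hA) hb'
    · obtain ⟨a, ha, rfl⟩ := Finset.mem_image.mp hz
      exact Finset.add_mem_add ha hb
  have hnot : M + b' ∉ A.image (· + b) := by
    simp only [Finset.mem_image, not_exists]
    rintro a ⟨ha, hab⟩
    have := A.le_max' a ha
    omega
  calc A.card < (A.image (· + b)).card + 1 := by
        rw [Finset.card_image_of_injective _ (add_left_injective b)]; omega
    _ = (insert (M + b') (A.image (· + b))).card := (Finset.card_insert_of_notMem hnot).symm
    _ ≤ (A + B).card := Finset.card_le_card hsub

lemma card_lt_card_add {A B : Finset ℕ} (hA : A.Nonempty) (hB : 2 ≤ B.card) :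
    A.card < (A + B).card := by
  obtain ⟨b, hb, b', hb', hne⟩ := Finset.one_lt_card.mp hB
  rcases hne.lt_or_gt with h | h
  · exact card_lt_card_add' hA hb hb' h
  · exact card_lt_card_add' hA hb' hb h

lemma two_pow_add_aux {a b c d : ℕ} (hab : a < b) (hcd : c < d) (hac : a ≤ c)
    (h : 2 ^ a + 2 ^ b = 2 ^ c + 2 ^ d) : a = c ∧ b = d := by
  have e1 : (2:ℕ) ^ b = 2 ^ a * 2 ^ (b - a) := by rw [← pow_add]; congr 1; omega
  have e2 : (2:ℕ) ^ c = 2 ^ a * 2 ^ (c - a) := by rw [← pow_add]; congr 1; omega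
  have e3 : (2:ℕ) ^ d = 2 ^ a * 2 ^ (d - a) := by rw [← pow_add]; congr 1; omega
  rw [e1, e2, e3] at h
  have hp : 0 < (2:ℕ) ^ a := pow_pos (by norm_num) a
  have h' : 1 + 2 ^ (b - a) = 2 ^ (c - a) + 2 ^ (d - a) := by
    apply Nat.eq_of_mul_eq_mul_left hp
    rw [Nat.mul_add, Nat.mul_add, Nat.mul_one]
    exact h
  rcases Nat.eq_or_lt_of_le hac with rfl | hlt
  · have hca : a - a = 0 := by omega
    rw [hca, pow_zero] at h'
    have hbd : (2:ℕ) ^ (b - a) = 2 ^ (d - a) := by omega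
    have := Nat.pow_right_injective (le_refl 2) hbd
    omega
  · exfalso
    have had : a < d := lt_of_le_of_lt hac hcd
    have eb : (2:ℕ) ^ (b - a) = 2 * 2 ^ (b - a - 1) := by
      rw [← pow_succ']; congr 1; omega
    have ec : (2:ℕ) ^ (c - a) = 2 * 2 ^ (c - a - 1) := by
      rw [← pow_succ']; congr 1; omega
    have ed : (2:ℕ) ^ (d - a) = 2 * 2 ^ (d - a - 1) := by
      rw [← pow_succ']; congr 1; omega
    rw [eb, ec, ed] at h'
    omega

lemma two_pow_add_two_pow {a b c d : ℕ} (hab : a < b) (hcd : c < d)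
    (h : 2 ^ a + 2 ^ b = 2 ^ c + 2 ^ d) : a = c ∧ b = d := by
  rcases le_total a c with hac | hca
  · exact two_pow_add_aux hab hcd hac h
  · have := two_pow_add_aux hcd hab hca h.symm
    omega

lemma two_pow_add_two_pow_ne {a b c d : ℕ} (hab : a ≠ b) (hcd : c ≠ d)
    (h : 2 ^ a + 2 ^ b = 2 ^ c + 2 ^ d) : (a = c ∧ b = d) ∨ (a = d ∧ b = c) := by
  have hcomm : 2 ^ b + 2 ^ a = 2 ^ c + 2 ^ d := by omega
  have hcomm2 : 2 ^ a + 2 ^ b = 2 ^ d + 2 ^ c := by omega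
  have hcomm3 : 2 ^ b + 2 ^ a = 2 ^ d + 2 ^ c := by omega
  rcases hab.lt_or_gt with h1 | h1 <;> rcases hcd.lt_or_gt with h2 | h2
  · exact Or.inl (two_pow_add_two_pow h1 h2 h)
  · exact Or.inr (two_pow_add_two_pow h1 h2 hcomm2)
  · have := two_pow_add_two_pow h1 h2 hcomm
    exact Or.inr ⟨this.2, this.1⟩
  · have := two_pow_add_two_pow h1 h2 hcomm3
    exact Or.inl ⟨this.2, this.1⟩

lemma weak_adj_mono {G : SimpleGraph V} {f : V → Finset ℕ} (hf : IsWeakIASI G f)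
    {u v : V} (h : G.Adj u v) : (f u).card = 1 ∨ (f v).card = 1 := by
  by_contra hc
  push_neg at hc
  have hu := Finset.card_pos.mpr (hf.1.1 u)
  have hv := Finset.card_pos.mpr (hf.1.1 v)
  have hu2 : 2 ≤ (f u).card := by omega
  have hv2 : 2 ≤ (f v).card := by omega
  have h1 : (f u).card < (f u + f v).card := card_lt_card_add (hf.1.1 u) hv2
  have h2 : (f v).card < (f u + f v).card := by
    rw [add_comm]; exact card_lt_card_add (hf.1.1 v) hu2
  have := hf.2 h
  omega

lemma weak_label_one_iff {G : SimpleGraph V} {f : V → Finset ℕ} (hf : IsWeakIASI G f)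
    {u v : V} (h : G.Adj u v) :
    (edgeLabel f s(u, v)).card = 1 ↔ (f u).card = 1 ∧ (f v).card = 1 := by
  rw [edgeLabel_mk, hf.2 h]
  have hu := Finset.card_pos.mpr (hf.1.1 u)
  have hv := Finset.card_pos.mpr (hf.1.1 v)
  omega

lemma mono_of_monoEdge {G : SimpleGraph V} {f : V → Finset ℕ} (hf : IsWeakIASI G f)
    {e : Sym2 V} (he : e ∈ G.edgeSet) (hc : (edgeLabel f e).card = 1) :
    ∀ u ∈ e, (f u).card = 1 := by
  induction e with
  | _ a b =>
    have hadj : G.Adj a b := he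
    rw [weak_label_one_iff hf hadj] at hc
    intro u hu
    rcases Sym2.mem_iff.mp hu with rfl | rfl
    · exact hc.1
    · exact hc.2

lemma exists_other_endpoint {G : SimpleGraph V} {e : Sym2 V} (he : e ∈ G.edgeSet)
    {u : V} (hu : u ∈ e) : ∃ v, e = s(u, v) ∧ G.Adj u v := by
  induction e with
  | _ a b =>
    rcases Sym2.mem_iff.mp hu with rfl | rfl
    · exact ⟨b, rfl, he⟩
    · exact ⟨a, Sym2.eq_swap, (SimpleGraph.Adj.symm he)⟩

set_option maxHeartbeats 3000000 in
/-- Given weak IASIs `f₁` of `G₁` (with `m₁'` mono-indexed edges) and `f₂`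
of `G₂` (with `n₂'` mono-indexed vertices and `m₂'` mono-indexed edges), the edge corona
`G₁ ⋄ G₂` admits a weak IASI with exactly
`m₁'(1 + m₂' + 2n₂') + (m₁ − m₁')(m₂ + n₂)` mono-indexed edges. -/
theorem edgeCorona_monoEdgeCount {V₁ V₂ : Type*} [Fintype V₁] [Fintype V₂]
    (G₁ : SimpleGraph V₁) (G₂ : SimpleGraph V₂)
    (h₁ : ∀ v : V₁, ∃ w, G₁.Adj v w) (h₂ : ∀ v : V₂, ∃ w, G₂.Adj v w)
    (f₁ : V₁ → Finset ℕ) (f₂ : V₂ → Finset ℕ)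
    (hf₁ : IsWeakIASI G₁ f₁) (hf₂ : IsWeakIASI G₂ f₂) :
    ∃ g : V₁ ⊕ (G₁.edgeSet × V₂) → Finset ℕ,
      IsWeakIASI (edgeCorona G₁ G₂) g ∧
      monoEdgeCount (edgeCorona G₁ G₂) g =
        monoEdgeCount G₁ f₁ *
            (1 + monoEdgeCount G₂ f₂ + 2 * monoVertexCount f₂) +
          (G₁.edgeSet.ncard - monoEdgeCount G₁ f₁) *
            (G₂.edgeSet.ncard + Fintype.card V₂) := by
  classical
  obtain ⟨i, hi⟩ := Countable.exists_injective_nat (V₁ ⊕ (G₁.edgeSet × V₂))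
  -- the mono-indexing predicate
  let P : V₁ ⊕ (G₁.edgeSet × V₂) → Prop := fun w =>
    match w with
    | Sum.inl v => (f₁ v).card = 1
    | Sum.inr p => (edgeLabel f₁ (p.1 : Sym2 V₁)).card ≠ 1 ∨ (f₂ p.2).card = 1
  let g : V₁ ⊕ (G₁.edgeSet × V₂) → Finset ℕ := fun w =>
    if P w then {2 ^ (i w + 1)} else {i w, 2 * i w + 1}
  have hgP : ∀ w, P w → g w = {2 ^ (i w + 1)} := fun w h => if_pos h
  have hgN : ∀ w, ¬ P w → g w = {i w, 2 * i w + 1} := fun w h => if_neg h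
  have hcP : ∀ w, P w → (g w).card = 1 := by
    intro w h; rw [hgP w h]; simp
  have hcN : ∀ w, ¬ P w → (g w).card = 2 := by
    intro w h; rw [hgN w h]
    exact Finset.card_pair (by omega)
  have hgne : ∀ w, (g w).Nonempty := by
    intro w
    by_cases h : P w
    · rw [hgP w h]; simp
    · rw [hgN w h]; simp
  have hPiff : ∀ w, (g w).card = 1 ↔ P w := by
    intro w
    by_cases h : P w
    · simp [hcP w h, h]
    · simp [hcN w h, h]
  have hPinl : ∀ u : V₁, P (Sum.inl u) ↔ (f₁ u).card = 1 := fun _ => Iff.rfl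
  have hPinr : ∀ p : G₁.edgeSet × V₂,
      P (Sum.inr p) ↔ ((edgeLabel f₁ (p.1 : Sym2 V₁)).card ≠ 1 ∨ (f₂ p.2).card = 1) :=
    fun _ => Iff.rfl
  -- adjacency characterizations
  have hadj_ll : ∀ u v : V₁,
      (edgeCorona G₁ G₂).Adj (Sum.inl u) (Sum.inl v) ↔ G₁.Adj u v := fun _ _ => Iff.rfl
  have hadj_lr : ∀ (u : V₁) (p : G₁.edgeSet × V₂),
      (edgeCorona G₁ G₂).Adj (Sum.inl u) (Sum.inr p) ↔ u ∈ (p.1 : Sym2 V₁) :=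
    fun _ _ => Iff.rfl
  have hadj_rl : ∀ (p : G₁.edgeSet × V₂) (v : V₁),
      (edgeCorona G₁ G₂).Adj (Sum.inr p) (Sum.inl v) ↔ v ∈ (p.1 : Sym2 V₁) :=
    fun _ _ => Iff.rfl
  have hadj_rr : ∀ p q : G₁.edgeSet × V₂,
      (edgeCorona G₁ G₂).Adj (Sum.inr p) (Sum.inr q) ↔
        p.1 = q.1 ∧ G₂.Adj p.2 q.2 := fun _ _ => Iff.rfl
  -- every corona edge has a mono endpoint
  have hPadj : ∀ {u v}, (edgeCorona G₁ G₂).Adj u v → P u ∨ P v := by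
    rintro (u | p) (v | q) h
    · exact weak_adj_mono hf₁ ((hadj_ll u v).mp h)
    · by_cases he : (edgeLabel f₁ (q.1 : Sym2 V₁)).card = 1
      · exact Or.inl (mono_of_monoEdge hf₁ q.1.2 he u ((hadj_lr u q).mp h))
      · exact Or.inr (Or.inl he)
    · by_cases he : (edgeLabel f₁ (p.1 : Sym2 V₁)).card = 1
      · exact Or.inr (mono_of_monoEdge hf₁ p.1.2 he v ((hadj_rl p v).mp h))
      · exact Or.inl (Or.inl he)
    · rcases weak_adj_mono hf₂ ((hadj_rr p q).mp h).2 with h' | h'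
      · exact Or.inl (Or.inr h')
      · exact Or.inr (Or.inr h')
  -- label shapes
  have hlab1 : ∀ u v, P u → P v →
      edgeLabel g s(u, v) = {2 ^ (i u + 1) + 2 ^ (i v + 1)} := by
    intro u v hu hv
    rw [edgeLabel_mk, hgP u hu, hgP v hv, Finset.singleton_add_singleton]
  have hlab2 : ∀ u v, P u → ¬ P v →
      edgeLabel g s(u, v) = {2 ^ (i u + 1) + i v, 2 ^ (i u + 1) + (2 * i v + 1)} := by
    intro u v hu hv
    rw [edgeLabel_mk, hgP u hu, hgN v hv, singleton_add_pair]
  have hrep : ∀ e ∈ (edgeCorona G₁ G₂).edgeSet,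
      ∃ u v, e = s(u, v) ∧ (edgeCorona G₁ G₂).Adj u v ∧ P u := by
    intro e he
    induction e with
    | _ a b =>
      have hadj : (edgeCorona G₁ G₂).Adj a b := he
      rcases hPadj hadj with h | h
      · exact ⟨a, b, rfl, hadj, h⟩
      · exact ⟨b, a, Sym2.eq_swap, hadj.symm, h⟩
  refine ⟨g, ⟨⟨hgne, ?_, ?_⟩, ?_⟩, ?_⟩
  · -- g injective
    intro w w' h
    by_cases hw : P w <;> by_cases hw' : P w'
    · rw [hgP w hw, hgP w' hw'] at h
      have := Finset.singleton_injective h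
      have := Nat.pow_right_injective (le_refl 2) this
      exact hi (by omega)
    · have c1 := hcP w hw
      have c2 := hcN w' hw'
      rw [h] at c1; omega
    · have c1 := hcN w hw
      have c2 := hcP w' hw'
      rw [h] at c1; omega
    · rw [hgN w hw, hgN w' hw'] at h
      have := pair_eq_pair_iff (by omega) (by omega) h
      exact hi this.1
  · -- edge label injective on edges
    intro e he e' he' hl
    obtain ⟨u, v, he1, hadj, hPu⟩ := hrep e he
    obtain ⟨u', v', he2, hadj', hPu'⟩ := hrep e' he'
    subst he1; subst he2
    have hne : u ≠ v := hadj.ne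
    have hne' : u' ≠ v' := hadj'.ne
    by_cases hv : P v <;> by_cases hv' : P v'
    · rw [hlab1 u v hPu hv, hlab1 u' v' hPu' hv'] at hl
      have hs := Finset.singleton_injective hl
      have h1 : i u + 1 ≠ i v + 1 := fun hh => hne (hi (by omega))
      have h2 : i u' + 1 ≠ i v' + 1 := fun hh => hne' (hi (by omega))
      rcases two_pow_add_two_pow_ne h1 h2 hs with ⟨ha, hb⟩ | ⟨ha, hb⟩
      · have : u = u' := hi (by omega)
        have : v = v' := hi (by omega)
        apply Sym2.eq_iff.mpr
        exact Or.inl ⟨hi (by omega), hi (by omega)⟩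
      · exact Sym2.eq_iff.mpr (Or.inr ⟨hi (by omega), hi (by omega)⟩)
    · exfalso
      rw [hlab1 u v hPu hv, hlab2 u' v' hPu' hv'] at hl
      have := congrArg Finset.card hl
      rw [Finset.card_singleton, Finset.card_pair (by omega)] at this
      omega
    · exfalso
      rw [hlab2 u v hPu hv, hlab1 u' v' hPu' hv'] at hl
      have := congrArg Finset.card hl
      rw [Finset.card_singleton, Finset.card_pair (by omega)] at this
      omega
    · rw [hlab2 u v hPu hv, hlab2 u' v' hPu' hv'] at hl
      obtain ⟨h3, h4⟩ := pair_eq_pair_iff (by omega) (by omega) hl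
      have hvv : v = v' := hi (by omega)
      have huu : u = u' := by
        have hpow : (2:ℕ) ^ (i u + 1) = 2 ^ (i u' + 1) := by omega
        have := Nat.pow_right_injective (le_refl 2) hpow
        exact hi (by omega)
      rw [hvv, huu]
  · -- weak condition
    intro u v hadj'
    rcases hPadj hadj' with h | h
    · rw [hgP u h, Finset.card_singleton_add, Finset.card_singleton]
      have := Finset.card_pos.mpr (hgne v)
      omega
    · rw [add_comm (g u) (g v), hgP v h, Finset.card_singleton_add, Finset.card_singleton]
      have := Finset.card_pos.mpr (hgne u)
      omega
  · -- the count
    haveI : Fintype ↥G₁.edgeSet := Set.Finite.fintype (Set.toFinite _)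
    haveI : Fintype ↥G₂.edgeSet := Set.Finite.fintype (Set.toFinite _)
    set E₁ := G₁.edgeFinset with hE₁def
    set E₂ := G₂.edgeFinset with hE₂def
    set MP₁ := E₁.filter (fun e => (edgeLabel f₁ e).card = 1) with hMP₁def
    set MP₂ := E₂.filter (fun e => (edgeLabel f₂ e).card = 1) with hMP₂def
    set NV₂ := (Finset.univ : Finset V₂).filter (fun x => (f₂ x).card = 1) with hNV₂def
    have hm1' : monoEdgeCount G₁ f₁ = MP₁.card := by
      have hset : {e | e ∈ G₁.edgeSet ∧ (edgeLabel f₁ e).card = 1} = ↑MP₁ := by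
        rw [hMP₁def, hE₁def]; ext e
        simp [SimpleGraph.mem_edgeFinset]
      rw [monoEdgeCount, hset, Set.ncard_coe_finset]
    have hm2' : monoEdgeCount G₂ f₂ = MP₂.card := by
      have hset : {e | e ∈ G₂.edgeSet ∧ (edgeLabel f₂ e).card = 1} = ↑MP₂ := by
        rw [hMP₂def, hE₂def]; ext e
        simp [SimpleGraph.mem_edgeFinset]
      rw [monoEdgeCount, hset, Set.ncard_coe_finset]
    have hn2' : monoVertexCount f₂ = NV₂.card := by
      have hset : {v | (f₂ v).card = 1} = ↑NV₂ := by rw [hNV₂def]; ext v; simp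
      rw [monoVertexCount, hset, Set.ncard_coe_finset]
    have hm1 : G₁.edgeSet.ncard = E₁.card := by
      rw [hE₁def, ← SimpleGraph.coe_edgeFinset, Set.ncard_coe_finset]
    have hm2 : G₂.edgeSet.ncard = E₂.card := by
      rw [hE₂def, ← SimpleGraph.coe_edgeFinset, Set.ncard_coe_finset]
    set MF := (Finset.univ : Finset (Sym2 (V₁ ⊕ (G₁.edgeSet × V₂)))).filter
        (fun e => e ∈ (edgeCorona G₁ G₂).edgeSet ∧ (edgeLabel g e).card = 1) with hMFdef
    have hLHS : monoEdgeCount (edgeCorona G₁ G₂) g = MF.card := by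
      have hset : {e | e ∈ (edgeCorona G₁ G₂).edgeSet ∧ (edgeLabel g e).card = 1} = ↑MF := by
        rw [hMFdef]; ext e; simp
      rw [monoEdgeCount, hset, Set.ncard_coe_finset]
    -- rank classification
    let rk : V₁ ⊕ (G₁.edgeSet × V₂) → ℕ := Sum.elim (fun _ => 0) (fun _ => 1)
    let c : Sym2 (V₁ ⊕ (G₁.edgeSet × V₂)) → ℕ :=
      Sym2.lift ⟨fun a b => rk a + rk b, fun a b => add_comm _ _⟩
    have hc_mk : ∀ a b, c s(a, b) = rk a + rk b := fun _ _ => rfl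
    have hrk0 : ∀ u : V₁, rk (Sum.inl u) = 0 := fun _ => rfl
    have hrk1 : ∀ p : G₁.edgeSet × V₂, rk (Sum.inr p) = 1 := fun _ => rfl
    have hrkle : ∀ w, rk w ≤ 1 := by
      rintro (w | w)
      · rw [hrk0]; omega
      · rw [hrk1]
    have hcle : ∀ e, c e ≤ 2 := by
      intro e
      induction e with
      | _ a b =>
        rw [hc_mk]
        have := hrkle a
        have := hrkle b
        omega
    have hsplit : MF.card = (MF.filter (fun e => c e = 0)).card +
        ((MF.filter (fun e => c e = 1)).card + (MF.filter (fun e => c e = 2)).card) := by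
      have h1 := Finset.card_filter_add_card_filter_not
        (s := MF) (p := fun e => c e = 0)
      have h2 := Finset.card_filter_add_card_filter_not
        (s := MF.filter fun e => ¬ c e = 0) (p := fun e => c e = 1)
      have e1 : (MF.filter fun e => ¬ c e = 0).filter (fun e => c e = 1)
          = MF.filter (fun e => c e = 1) := by
        rw [Finset.filter_filter]; ext e; simp only [Finset.mem_filter]; constructor
        · rintro ⟨h, _, h2'⟩; exact ⟨h, h2'⟩
        · rintro ⟨h, h2'⟩; exact ⟨h, by omega, h2'⟩
      have e2 : (MF.filter fun e => ¬ c e = 0).filter (fun e => ¬ c e = 1)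
          = MF.filter (fun e => c e = 2) := by
        rw [Finset.filter_filter]; ext e; simp only [Finset.mem_filter]; constructor
        · rintro ⟨h, h1', h2'⟩; exact ⟨h, by have := hcle e; omega⟩
        · rintro ⟨h, h2'⟩; exact ⟨h, by omega, by omega⟩
      rw [e1, e2] at h2
      omega
    have hcard0 : (MF.filter (fun e => c e = 0)).card = MP₁.card := by
      refine (Finset.card_nbij (Sym2.map Sum.inl) ?_ ?_ ?_).symm
      · intro e he
        rw [hMP₁def, hE₁def, Finset.mem_coe, Finset.mem_filter, SimpleGraph.mem_edgeFinset] at he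
        obtain ⟨hee, hcc⟩ := he
        revert hee hcc
        induction e with
        | _ a b =>
          intro hee hcc
          have hadj : G₁.Adj a b := hee
          have hmono := (weak_label_one_iff hf₁ hadj).mp hcc
          rw [Sym2.map_pair_eq]
          simp only [Finset.mem_coe, Finset.mem_filter, hMFdef, Finset.mem_univ, true_and]
          refine ⟨⟨?_, ?_⟩, ?_⟩
          · exact (hadj_ll a b).mpr hadj
          · rw [hlab1 _ _ ((hPinl a).mpr hmono.1) ((hPinl b).mpr hmono.2)]
            simp
          · rw [hc_mk, hrk0, hrk0]
      · exact fun e _ e' _ h => Sym2.map.injective Sum.inl_injective h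
      · intro e' he'
        obtain ⟨hmf1, hc1⟩ := Finset.mem_filter.mp (Finset.mem_coe.mp he')
        rw [hMFdef, Finset.mem_filter] at hmf1
        obtain ⟨-, hedge, hlabl⟩ := hmf1
        clear he'
        revert hc1 hedge hlabl
        induction e' with
        | _ w₁ w₂ =>
          intro hcc hedge hlabl
          rcases w₁ with u | p <;> rcases w₂ with v | q
          · have hadj : G₁.Adj u v := (hadj_ll u v).mp hedge
            rw [edgeLabel_mk] at hlabl
            have hPs := (card_add_eq_one_iff (hgne (Sum.inl u)) (hgne (Sum.inl v))).mp hlabl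
            have hf1 : (edgeLabel f₁ s(u, v)).card = 1 :=
              (weak_label_one_iff hf₁ hadj).mpr
                ⟨(hPinl u).mp ((hPiff (Sum.inl u)).mp hPs.1),
                  (hPinl v).mp ((hPiff (Sum.inl v)).mp hPs.2)⟩
            refine ⟨s(u, v), ?_, Sym2.map_pair_eq Sum.inl u v⟩
            simp only [hMP₁def, hE₁def, Finset.mem_coe, Finset.mem_filter,
              SimpleGraph.mem_edgeFinset]
            exact ⟨hadj, hf1⟩
          · rw [hc_mk, hrk0, hrk1] at hcc; omega
          · rw [hc_mk, hrk1, hrk0] at hcc; omega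
          · rw [hc_mk, hrk1, hrk1] at hcc; omega
    have hN : (E₁.filter (fun e => ¬ (edgeLabel f₁ e).card = 1)).card
        = E₁.card - MP₁.card := by
      have h0 := Finset.card_filter_add_card_filter_not
        (s := E₁) (p := fun e => (edgeLabel f₁ e).card = 1)
      rw [← hMP₁def] at h0
      omega
    have hcard1 : (MF.filter (fun e => c e = 1)).card
        = 2 * MP₁.card * NV₂.card + (E₁.card - MP₁.card) * Fintype.card V₂ := by
      have hdmono : (Finset.univ.filter
          (fun d : G₁.Dart => (edgeLabel f₁ d.edge).card = 1)).card = 2 * MP₁.card := by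
        have H : ∀ d ∈ Finset.univ.filter
            (fun d : G₁.Dart => (edgeLabel f₁ d.edge).card = 1), d.edge ∈ MP₁ := by
          intro d hd
          rw [hMP₁def, hE₁def]
          exact Finset.mem_filter.mpr ⟨SimpleGraph.mem_edgeFinset.mpr d.edge_mem,
            (Finset.mem_filter.mp hd).2⟩
        rw [Finset.card_eq_sum_card_fiberwise H]
        refine (Finset.sum_const_nat ?_).trans (Nat.mul_comm _ _)
        intro e hee
        rw [hMP₁def, hE₁def, Finset.mem_filter, SimpleGraph.mem_edgeFinset] at hee
        have hfib : (Finset.univ.filter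
            (fun d : G₁.Dart => (edgeLabel f₁ d.edge).card = 1)).filter
              (fun d => d.edge = e)
            = Finset.univ.filter (fun d : G₁.Dart => d.edge = e) := by
          rw [Finset.filter_filter]
          ext d
          simp only [Finset.mem_filter, Finset.mem_univ, true_and]
          constructor
          · rintro ⟨_, h⟩; exact h
          · intro h; exact ⟨by rw [h]; exact hee.2, h⟩
        rw [hfib]
        exact G₁.dart_edge_fiber_card e hee.1
      have hdnon : (Finset.univ.filter (fun d : G₁.Dart =>
          ((edgeLabel f₁ d.edge).card ≠ 1 ∧ (f₁ d.toProd.1).card = 1))).card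
          = E₁.card - MP₁.card := by
        have H : ∀ d ∈ Finset.univ.filter (fun d : G₁.Dart =>
            ((edgeLabel f₁ d.edge).card ≠ 1 ∧ (f₁ d.toProd.1).card = 1)),
            d.edge ∈ E₁.filter (fun e => ¬ (edgeLabel f₁ e).card = 1) := by
          intro d hd
          rw [hE₁def]
          exact Finset.mem_filter.mpr ⟨SimpleGraph.mem_edgeFinset.mpr d.edge_mem,
            (Finset.mem_filter.mp hd).2.1⟩
        rw [Finset.card_eq_sum_card_fiberwise H]
        refine (Finset.sum_const_nat ?_).trans (by rw [Nat.mul_one]; exact hN)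
        intro e hee
        rw [hE₁def, Finset.mem_filter, SimpleGraph.mem_edgeFinset] at hee
        obtain ⟨heE, hne⟩ := hee
        revert heE hne
        induction e with
        | _ a b =>
          intro heE hne
          have hadj : G₁.Adj a b := heE
          have hone := weak_adj_mono hf₁ hadj
          have hnotboth : ¬ ((f₁ a).card = 1 ∧ (f₁ b).card = 1) :=
            fun hh => hne ((weak_label_one_iff hf₁ hadj).mpr hh)
          have hfib : (Finset.univ.filter (fun d : G₁.Dart =>
              ((edgeLabel f₁ d.edge).card ≠ 1 ∧ (f₁ d.toProd.1).card = 1))).filter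
                (fun d => d.edge = s(a, b))
              = (Finset.univ.filter (fun d : G₁.Dart => d.edge = s(a, b))).filter
                  (fun d => (f₁ d.toProd.1).card = 1) := by
            rw [Finset.filter_filter, Finset.filter_filter]
            ext d
            simp only [Finset.mem_filter, Finset.mem_univ, true_and]
            constructor
            · rintro ⟨⟨h1, h2⟩, h3⟩; exact ⟨h3, h2⟩
            · rintro ⟨h3, h2⟩; exact ⟨⟨by rw [h3]; exact hne, h2⟩, h3⟩
          rw [hfib]
          have hfib2 : (Finset.univ.filter (fun d : G₁.Dart => d.edge = s(a, b)))
              = {(⟨(a, b), hadj⟩ : G₁.Dart), (⟨(a, b), hadj⟩ : G₁.Dart).symm} := by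
            ext d
            simp only [Finset.mem_filter, Finset.mem_univ, true_and, Finset.mem_insert,
              Finset.mem_singleton]
            rw [show s(a, b) = (⟨(a, b), hadj⟩ : G₁.Dart).edge from rfl,
              SimpleGraph.dart_edge_eq_iff]
          rw [hfib2]
          rcases hone with ha | hb
          · have hb' : ¬ (f₁ b).card = 1 := fun hh => hnotboth ⟨ha, hh⟩
            rw [Finset.filter_insert, Finset.filter_singleton,
              show (⟨(a, b), hadj⟩ : G₁.Dart).toProd.1 = a from rfl,
              show ((⟨(a, b), hadj⟩ : G₁.Dart).symm).toProd.1 = b from rfl,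
              if_pos ha, if_neg hb']
            simp
          · have ha' : ¬ (f₁ a).card = 1 := fun hh => hnotboth ⟨hh, hb⟩
            rw [Finset.filter_insert, Finset.filter_singleton,
              show (⟨(a, b), hadj⟩ : G₁.Dart).toProd.1 = a from rfl,
              show ((⟨(a, b), hadj⟩ : G₁.Dart).symm).toProd.1 = b from rfl,
              if_neg ha', if_pos hb]
            simp
      have hbij : (MF.filter (fun e => c e = 1)).card
          = (Finset.univ.filter (fun p : G₁.Dart × V₂ =>
              ((edgeLabel f₁ p.1.edge).card = 1 ∧ (f₂ p.2).card = 1) ∨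
              (((edgeLabel f₁ p.1.edge).card ≠ 1 ∧ (f₁ p.1.toProd.1).card = 1) ∧
                True))).card := by
        refine (Finset.card_nbij (fun p : G₁.Dart × V₂ =>
          s(Sum.inl p.1.toProd.1, Sum.inr (⟨p.1.edge, p.1.edge_mem⟩, p.2))) ?_ ?_ ?_).symm
        · intro p hp
          obtain ⟨d, x⟩ := p
          obtain ⟨-, hQ⟩ := Finset.mem_filter.mp hp
          have hmemedge : d.toProd.1 ∈ d.edge := Sym2.mem_mk_left _ _
          simp only [Finset.mem_coe, hMFdef, Finset.mem_filter, Finset.mem_univ, true_and]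
          refine ⟨⟨?_, ?_⟩, ?_⟩
          · exact (hadj_lr d.toProd.1 (⟨d.edge, d.edge_mem⟩, x)).mpr hmemedge
          · rcases hQ with ⟨he, hx⟩ | ⟨⟨he, hu⟩, -⟩
            · rw [hlab1 _ _ ((hPinl _).mpr (mono_of_monoEdge hf₁ d.edge_mem he _ hmemedge))
                ((hPinr _).mpr (Or.inr hx))]
              simp
            · rw [hlab1 _ _ ((hPinl _).mpr hu) ((hPinr _).mpr (Or.inl he))]
              simp
          · rw [hc_mk, hrk0, hrk1]
        · intro p hp p' hp' h
          obtain ⟨d, x⟩ := p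
          obtain ⟨d', x'⟩ := p'
          rw [Sym2.eq_iff] at h
          rcases h with ⟨h1, h2⟩ | ⟨h1, h2⟩
          · have hfst : d.toProd.1 = d'.toProd.1 := Sum.inl_injective h1
            have h2' := Sum.inr_injective h2
            have h3 : (⟨d.edge, d.edge_mem⟩ : G₁.edgeSet) = ⟨d'.edge, d'.edge_mem⟩ :=
              congrArg Prod.fst h2'
            have h4 : x = x' := congrArg Prod.snd h2'
            have hedge : d.edge = d'.edge := congrArg Subtype.val h3
            have hd : d = d' := by
              rcases (SimpleGraph.dart_edge_eq_iff d d').mp hedge with h | h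
              · exact h
              · exfalso
                rw [h] at hfst
                exact d'.adj.ne hfst.symm
            rw [hd, h4]
          · exact absurd h1 (by simp)
        · intro e' he'
          obtain ⟨hmf1, hcc⟩ := Finset.mem_filter.mp (Finset.mem_coe.mp he')
          rw [hMFdef, Finset.mem_filter] at hmf1
          obtain ⟨-, hedge, hlabl⟩ := hmf1
          clear he'
          revert hcc hedge hlabl
          induction e' with
          | _ w₁ w₂ =>
            intro hcc hedge hlabl
            rcases w₁ with u | p <;> rcases w₂ with v | q
            · rw [hc_mk, hrk0, hrk0] at hcc; omega
            · obtain ⟨q, x⟩ := q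
              have hmem : u ∈ (q.1 : Sym2 V₁) := (hadj_lr u (q, x)).mp hedge
              obtain ⟨v, hqe, huv⟩ := exists_other_endpoint q.2 hmem
              rw [edgeLabel_mk] at hlabl
              have hPs := (card_add_eq_one_iff (hgne (Sum.inl u))
                (hgne (Sum.inr (q, x)))).mp hlabl
              have hPu := (hPiff (Sum.inl u)).mp hPs.1
              have hPq := (hPiff (Sum.inr (q, x))).mp hPs.2
              have hdedge : (⟨(u, v), huv⟩ : G₁.Dart).edge = (q.1 : Sym2 V₁) := hqe.symm
              refine ⟨(⟨(u, v), huv⟩, x), ?_, ?_⟩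
              · simp only [Finset.mem_coe, Finset.mem_filter, Finset.mem_univ, true_and]
                by_cases hq1 : (edgeLabel f₁ (q.1 : Sym2 V₁)).card = 1
                · left
                  refine ⟨by rw [hdedge]; exact hq1, ?_⟩
                  rcases (hPinr _).mp hPq with h | h
                  · exact absurd hq1 h
                  · exact h
                · right
                  exact ⟨⟨by rw [hdedge]; exact hq1, (hPinl u).mp hPu⟩, trivial⟩
              · have hsub : (⟨(⟨(u, v), huv⟩ : G₁.Dart).edge,
                    (⟨(u, v), huv⟩ : G₁.Dart).edge_mem⟩ : G₁.edgeSet) = q :=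
                  Subtype.ext hdedge
                exact congrArg (fun z => s(Sum.inl u, Sum.inr (z, x))) hsub
            · obtain ⟨q, x⟩ := p
              have hmem : v ∈ (q.1 : Sym2 V₁) := (hadj_rl (q, x) v).mp hedge
              obtain ⟨u', hqe, huv⟩ := exists_other_endpoint q.2 hmem
              rw [edgeLabel_mk] at hlabl
              have hPs := (card_add_eq_one_iff (hgne (Sum.inr (q, x)))
                (hgne (Sum.inl v))).mp hlabl
              have hPq := (hPiff (Sum.inr (q, x))).mp hPs.1
              have hPv := (hPiff (Sum.inl v)).mp hPs.2
              have hdedge : (⟨(v, u'), huv⟩ : G₁.Dart).edge = (q.1 : Sym2 V₁) := hqe.symm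
              refine ⟨(⟨(v, u'), huv⟩, x), ?_, ?_⟩
              · simp only [Finset.mem_coe, Finset.mem_filter, Finset.mem_univ, true_and]
                by_cases hq1 : (edgeLabel f₁ (q.1 : Sym2 V₁)).card = 1
                · left
                  refine ⟨by rw [hdedge]; exact hq1, ?_⟩
                  rcases (hPinr _).mp hPq with h | h
                  · exact absurd hq1 h
                  · exact h
                · right
                  exact ⟨⟨by rw [hdedge]; exact hq1, (hPinl v).mp hPv⟩, trivial⟩
              · have hsub : (⟨(⟨(v, u'), huv⟩ : G₁.Dart).edge,
                    (⟨(v, u'), huv⟩ : G₁.Dart).edge_mem⟩ : G₁.edgeSet) = q :=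
                  Subtype.ext hdedge
                exact (congrArg (fun z => s(Sum.inl v, Sum.inr (z, x))) hsub).trans
                  Sym2.eq_swap
            · rw [hc_mk, hrk1, hrk1] at hcc; omega
      rw [hbij]
      have hdisj : Disjoint
          (Finset.univ.filter (fun p : G₁.Dart × V₂ =>
            (edgeLabel f₁ p.1.edge).card = 1 ∧ (f₂ p.2).card = 1))
          (Finset.univ.filter (fun p : G₁.Dart × V₂ =>
            ((edgeLabel f₁ p.1.edge).card ≠ 1 ∧ (f₁ p.1.toProd.1).card = 1) ∧ True)) := by
        rw [Finset.disjoint_left]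
        intro p hp1 hp2
        rw [Finset.mem_filter] at hp1 hp2
        exact hp2.2.1.1 hp1.2.1
      rw [Finset.filter_or, Finset.card_union_of_disjoint hdisj]
      have hA : (Finset.univ.filter (fun p : G₁.Dart × V₂ =>
          (edgeLabel f₁ p.1.edge).card = 1 ∧ (f₂ p.2).card = 1)).card
          = 2 * MP₁.card * NV₂.card := by
        rw [← Finset.univ_product_univ,
          Finset.filter_product (fun d : G₁.Dart => (edgeLabel f₁ d.edge).card = 1)
            (fun x : V₂ => (f₂ x).card = 1),
          Finset.card_product, hdmono, ← hNV₂def]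
      have hB : (Finset.univ.filter (fun p : G₁.Dart × V₂ =>
          ((edgeLabel f₁ p.1.edge).card ≠ 1 ∧ (f₁ p.1.toProd.1).card = 1) ∧ True)).card
          = (E₁.card - MP₁.card) * Fintype.card V₂ := by
        rw [← Finset.univ_product_univ,
          Finset.filter_product (fun d : G₁.Dart =>
            (edgeLabel f₁ d.edge).card ≠ 1 ∧ (f₁ d.toProd.1).card = 1)
            (fun _ : V₂ => True),
          Finset.card_product, hdnon, Finset.filter_true, Finset.card_univ]
      rw [hA, hB]
    have hcard2 : (MF.filter (fun e => c e = 2)).card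
        = MP₁.card * MP₂.card + (E₁.card - MP₁.card) * E₂.card := by
      have hsub1 : (Finset.univ.filter
          (fun q : G₁.edgeSet => (edgeLabel f₁ (q : Sym2 V₁)).card = 1)).card
          = MP₁.card := by
        refine Finset.card_nbij Subtype.val ?_ ?_ ?_
        · intro q hq
          rw [hMP₁def, hE₁def]
          exact Finset.mem_filter.mpr ⟨SimpleGraph.mem_edgeFinset.mpr q.2,
            (Finset.mem_filter.mp hq).2⟩
        · exact Subtype.val_injective.injOn
        · intro e he
          simp only [hMP₁def, hE₁def, Finset.mem_coe, Finset.mem_filter,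
            SimpleGraph.mem_edgeFinset] at he
          exact ⟨⟨e, he.1⟩, by
            simp only [Finset.mem_coe, Finset.mem_filter, Finset.mem_univ, true_and]
            exact he.2, rfl⟩
      have hsub2 : (Finset.univ.filter
          (fun q : G₁.edgeSet => ¬ (edgeLabel f₁ (q : Sym2 V₁)).card = 1)).card
          = E₁.card - MP₁.card := by
        rw [← hN]
        refine Finset.card_nbij Subtype.val ?_ ?_ ?_
        · intro q hq
          rw [hE₁def]
          exact Finset.mem_filter.mpr ⟨SimpleGraph.mem_edgeFinset.mpr q.2,
            (Finset.mem_filter.mp hq).2⟩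
        · exact Subtype.val_injective.injOn
        · intro e he
          simp only [hE₁def, Finset.mem_coe, Finset.mem_filter,
            SimpleGraph.mem_edgeFinset] at he
          exact ⟨⟨e, he.1⟩, by
            simp only [Finset.mem_coe, Finset.mem_filter, Finset.mem_univ, true_and]
            exact he.2, rfl⟩
      have hq2mono : (Finset.univ.filter
          (fun q : Sym2 V₂ => q ∈ G₂.edgeSet ∧ (edgeLabel f₂ q).card = 1)).card
          = MP₂.card := by
        have he : Finset.univ.filter
            (fun q : Sym2 V₂ => q ∈ G₂.edgeSet ∧ (edgeLabel f₂ q).card = 1) = MP₂ := by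
          rw [hMP₂def, hE₂def]
          ext q
          simp [SimpleGraph.mem_edgeFinset]
        rw [he]
      have hq2all : (Finset.univ.filter (fun q : Sym2 V₂ => q ∈ G₂.edgeSet)).card
          = E₂.card := by
        have he : Finset.univ.filter (fun q : Sym2 V₂ => q ∈ G₂.edgeSet) = E₂ := by
          rw [hE₂def]
          ext q
          simp [SimpleGraph.mem_edgeFinset]
        rw [he]
      have hbij2 : (MF.filter (fun e => c e = 2)).card
          = (Finset.univ.filter (fun p : G₁.edgeSet × Sym2 V₂ =>
              ((edgeLabel f₁ (p.1 : Sym2 V₁)).card = 1 ∧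
                (p.2 ∈ G₂.edgeSet ∧ (edgeLabel f₂ p.2).card = 1)) ∨
              (¬ (edgeLabel f₁ (p.1 : Sym2 V₁)).card = 1 ∧ p.2 ∈ G₂.edgeSet))).card := by
        refine (Finset.card_nbij (fun p : G₁.edgeSet × Sym2 V₂ =>
          Sym2.map (fun z => Sum.inr (p.1, z)) p.2) ?_ ?_ ?_).symm
        · intro p hp
          obtain ⟨q, e₂⟩ := p
          obtain ⟨-, hR⟩ := Finset.mem_filter.mp hp
          revert hR
          induction e₂ with
          | _ x y =>
            intro hR
            have hady : G₂.Adj x y := by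
              rcases hR with ⟨-, hmem, -⟩ | ⟨-, hmem⟩ <;> exact hmem
            have hmap : Sym2.map (fun z => Sum.inr ((q : G₁.edgeSet), z) :
                V₂ → V₁ ⊕ (G₁.edgeSet × V₂)) s(x, y)
                = s(Sum.inr (q, x), Sum.inr (q, y)) := Sym2.map_pair_eq _ _ _
            show Sym2.map (fun z => Sum.inr (q, z)) s(x, y) ∈ _
            rw [hmap]
            simp only [Finset.mem_coe, hMFdef, Finset.mem_filter, Finset.mem_univ, true_and]
            refine ⟨⟨?_, ?_⟩, ?_⟩
            · exact (hadj_rr (q, x) (q, y)).mpr ⟨rfl, hady⟩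
            · rcases hR with ⟨h1, hmem, hl2⟩ | ⟨h1, hmem⟩
              · rw [hlab1 _ _
                  ((hPinr _).mpr (Or.inr (mono_of_monoEdge hf₂ hmem hl2 x
                    (Sym2.mem_mk_left x y))))
                  ((hPinr _).mpr (Or.inr (mono_of_monoEdge hf₂ hmem hl2 y
                    (Sym2.mem_mk_right x y))))]
                simp
              · rw [hlab1 _ _ ((hPinr _).mpr (Or.inl h1)) ((hPinr _).mpr (Or.inl h1))]
                simp
            · rw [hc_mk, hrk1, hrk1]
        · intro p hp p' hp' h
          obtain ⟨q, e₂⟩ := p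
          obtain ⟨q', e₂'⟩ := p'
          clear hp hp'
          revert h
          induction e₂ with
          | _ x y =>
            induction e₂' with
            | _ x' y' =>
              intro h
              simp only [Sym2.map_pair_eq, Sym2.eq_iff] at h
              rcases h with ⟨h1, h2⟩ | ⟨h1, h2⟩
              · simp only [Sum.inr.injEq, Prod.mk.injEq] at h1 h2
                exact Prod.ext h1.1 (Sym2.eq_iff.mpr (Or.inl ⟨h1.2, h2.2⟩))
              · simp only [Sum.inr.injEq, Prod.mk.injEq] at h1 h2
                exact Prod.ext h1.1 (Sym2.eq_iff.mpr (Or.inr ⟨h1.2, h2.2⟩))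
        · intro e' he'
          obtain ⟨hmf1, hcc⟩ := Finset.mem_filter.mp (Finset.mem_coe.mp he')
          rw [hMFdef, Finset.mem_filter] at hmf1
          obtain ⟨-, hedge, hlabl⟩ := hmf1
          clear he'
          revert hcc hedge hlabl
          induction e' with
          | _ w₁ w₂ =>
            intro hcc hedge hlabl
            rcases w₁ with u | p <;> rcases w₂ with v | q
            · rw [hc_mk, hrk0, hrk0] at hcc; omega
            · rw [hc_mk, hrk0, hrk1] at hcc; omega
            · rw [hc_mk, hrk1, hrk0] at hcc; omega
            · obtain ⟨qa, x⟩ := p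
              obtain ⟨qb, y⟩ := q
              obtain ⟨hqq, hady⟩ := (hadj_rr (qa, x) (qb, y)).mp hedge
              obtain rfl : qa = qb := hqq
              rw [edgeLabel_mk] at hlabl
              have hPs := (card_add_eq_one_iff (hgne (Sum.inr (qa, x)))
                (hgne (Sum.inr (qa, y)))).mp hlabl
              have hPx := (hPiff (Sum.inr (qa, x))).mp hPs.1
              have hPy := (hPiff (Sum.inr (qa, y))).mp hPs.2
              refine ⟨(qa, s(x, y)), ?_, Sym2.map_pair_eq _ _ _⟩
              simp only [Finset.mem_coe, Finset.mem_filter, Finset.mem_univ, true_and]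
              have hmem : s(x, y) ∈ G₂.edgeSet := hady
              by_cases hq1 : (edgeLabel f₁ (qa.1 : Sym2 V₁)).card = 1
              · left
                refine ⟨hq1, hmem, ?_⟩
                have hx : (f₂ x).card = 1 := by
                  rcases (hPinr _).mp hPx with h | h
                  · exact absurd hq1 h
                  · exact h
                have hy : (f₂ y).card = 1 := by
                  rcases (hPinr _).mp hPy with h | h
                  · exact absurd hq1 h
                  · exact h
                exact (weak_label_one_iff hf₂ hady).mpr ⟨hx, hy⟩
              · right
                exact ⟨hq1, hmem⟩
      rw [hbij2]
      have hdisj2 : Disjoint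
          (Finset.univ.filter (fun p : G₁.edgeSet × Sym2 V₂ =>
            (edgeLabel f₁ (p.1 : Sym2 V₁)).card = 1 ∧
              (p.2 ∈ G₂.edgeSet ∧ (edgeLabel f₂ p.2).card = 1)))
          (Finset.univ.filter (fun p : G₁.edgeSet × Sym2 V₂ =>
            ¬ (edgeLabel f₁ (p.1 : Sym2 V₁)).card = 1 ∧ p.2 ∈ G₂.edgeSet)) := by
        rw [Finset.disjoint_left]
        intro p hp1 hp2
        rw [Finset.mem_filter] at hp1 hp2
        exact hp2.2.1 hp1.2.1
      rw [Finset.filter_or, Finset.card_union_of_disjoint hdisj2]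
      have hA : (Finset.univ.filter (fun p : G₁.edgeSet × Sym2 V₂ =>
          (edgeLabel f₁ (p.1 : Sym2 V₁)).card = 1 ∧
            (p.2 ∈ G₂.edgeSet ∧ (edgeLabel f₂ p.2).card = 1))).card
          = MP₁.card * MP₂.card := by
        rw [← Finset.univ_product_univ,
          Finset.filter_product
            (fun q : G₁.edgeSet => (edgeLabel f₁ (q : Sym2 V₁)).card = 1)
            (fun q : Sym2 V₂ => q ∈ G₂.edgeSet ∧ (edgeLabel f₂ q).card = 1),
          Finset.card_product, hsub1, hq2mono]
      have hB : (Finset.univ.filter (fun p : G₁.edgeSet × Sym2 V₂ =>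
          ¬ (edgeLabel f₁ (p.1 : Sym2 V₁)).card = 1 ∧ p.2 ∈ G₂.edgeSet)).card
          = (E₁.card - MP₁.card) * E₂.card := by
        rw [← Finset.univ_product_univ,
          Finset.filter_product
            (fun q : G₁.edgeSet => ¬ (edgeLabel f₁ (q : Sym2 V₁)).card = 1)
            (fun q : Sym2 V₂ => q ∈ G₂.edgeSet),
          Finset.card_product, hsub2, hq2all]
      rw [hA, hB]
    rw [hLHS, hsplit, hcard0, hcard1, hcard2, hm1', hm2', hn2', hm1, hm2]
    have hle : MP₁.card ≤ E₁.card := by rw [hMP₁def]; exact Finset.card_filter_le _ _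
    generalize hk : E₁.card - MP₁.card = k
    ring

end IASIPaper
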